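/- arXiv:1203.3149 — 3 statements merged into one kernel-verified Lean document; each statement's English description precedes it below -/
import Mathlib

section
/- Let n ≥ 2 be an integer and s ∈ (0,1). Let u : (0,∞) → ℝ be continuous and pointwise s-harmonic, that is, for every r > 0 the function τ ↦ [u(r) − u(rτ) + (u(r) − u(r/τ)) τ^{2s−n}] · τ (τ²−1)^{−1−2s} H(τ) is Lebesgue integrable on (1,∞) with ∫₁^∞ of it equal to 0. If u attains its supremum at some r̄ > 0, or attains its infimum at some r̄ > 0, then u is constant on (0,∞). -/
/-!
At a maximum point `r̄` both differences `u r̄ - u (r̄ τ)` and `u r̄ - u (r̄ / τ)` are nonnegative,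
and the weight `τ (τ² - 1)^(-1-2s) H(τ)` is positive on `(1, ∞)`, so the integrand of the
harmonicity condition at `r̄` is nonnegative. Its integral vanishes, hence both differences vanish
for almost every `τ > 1`, and by continuity for every `τ > 1`: `u` equals `u r̄` on `(r̄, ∞)` and
on `(0, r̄)`. A minimum of `u` is a maximum of `-u`, which is again radially `s`-harmonic.
-/

open MeasureTheory

/-- The kernel `H(τ)` from the radial representation of the fractional Laplacian. -/
noncomputable def Hker (n : ℕ) (s τ : ℝ) : ℝ :=
  2 * Real.pi * (Real.pi ^ (((n : ℝ) - 3) / 2) / Real.Gamma (((n : ℝ) - 1) / 2)) *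
    ∫ θ in (0:ℝ)..Real.pi,
      Real.sin θ ^ (n - 2) *
        ((Real.sqrt (τ ^ 2 - Real.sin θ ^ 2) + Real.cos θ) ^ (1 + 2 * s) /
          Real.sqrt (τ ^ 2 - Real.sin θ ^ 2))

open Set

lemma sq_sub_sin_sq_pos {τ : ℝ} (hτ : 1 < τ) (θ : ℝ) : 0 < τ ^ 2 - Real.sin θ ^ 2 := by
  nlinarith [Real.sin_sq_le_one θ]

lemma sqrt_sq_sub_sin_sq_add_cos_pos {τ : ℝ} (hτ : 1 < τ) (θ : ℝ) :
    0 < √(τ ^ 2 - Real.sin θ ^ 2) + Real.cos θ := by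
  have habs : |Real.cos θ| < √(τ ^ 2 - Real.sin θ ^ 2) := by
    rw [Real.lt_sqrt (abs_nonneg _), sq_abs]
    nlinarith [Real.sin_sq_add_cos_sq θ]
  linarith [neg_abs_le (Real.cos θ)]

lemma Hker_pos {n : ℕ} (hn : 2 ≤ n) (s : ℝ) {τ : ℝ} (hτ : 1 < τ) : 0 < Hker n s τ := by
  have hroot : ∀ θ, 0 < √(τ ^ 2 - Real.sin θ ^ 2) := fun θ =>
    Real.sqrt_pos.2 (sq_sub_sin_sq_pos hτ θ)
  have hconst : 0 < Real.pi ^ (((n : ℝ) - 3) / 2) / Real.Gamma (((n : ℝ) - 1) / 2) := by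
    have : (2 : ℝ) ≤ n := by exact_mod_cast hn
    exact div_pos (Real.rpow_pos_of_pos Real.pi_pos _) (Real.Gamma_pos_of_pos (by linarith))
  have hroot_cont : Continuous fun θ => √(τ ^ 2 - Real.sin θ ^ 2) := by fun_prop
  have hcont : Continuous fun θ => Real.sin θ ^ (n - 2) *
      ((√(τ ^ 2 - Real.sin θ ^ 2) + Real.cos θ) ^ (1 + 2 * s) / √(τ ^ 2 - Real.sin θ ^ 2)) :=
    (Real.continuous_sin.pow _).mul
      (((hroot_cont.add Real.continuous_cos).rpow_const fun θ =>
        Or.inl (sqrt_sq_sub_sin_sq_add_cos_pos hτ θ).ne').div hroot_cont fun θ => (hroot θ).ne')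
  have hint : 0 < ∫ θ in (0 : ℝ)..Real.pi, Real.sin θ ^ (n - 2) *
      ((√(τ ^ 2 - Real.sin θ ^ 2) + Real.cos θ) ^ (1 + 2 * s) / √(τ ^ 2 - Real.sin θ ^ 2)) :=
    intervalIntegral.intervalIntegral_pos_of_pos_on (hcont.intervalIntegrable _ _)
      (fun θ hθ => mul_pos (pow_pos (Real.sin_pos_of_pos_of_lt_pi hθ.1 hθ.2) _)
        (div_pos (Real.rpow_pos_of_pos (sqrt_sq_sub_sin_sq_add_cos_pos hτ θ) _) (hroot θ)))
      Real.pi_pos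
  exact mul_pos (mul_pos (by positivity) hconst) hint

noncomputable def radialDiff (n : ℕ) (s : ℝ) (u : ℝ → ℝ) (r τ : ℝ) : ℝ :=
  u r - u (r * τ) + (u r - u (r / τ)) * τ ^ (2 * s - (n : ℝ))

noncomputable def radialWeight (n : ℕ) (s τ : ℝ) : ℝ :=
  τ * (τ ^ 2 - 1) ^ (-1 - 2 * s) * Hker n s τ

def IsRadiallySHarmonic (n : ℕ) (s : ℝ) (u : ℝ → ℝ) : Prop :=
  ∀ r > (0 : ℝ),
    IntegrableOn (fun τ => radialDiff n s u r τ * radialWeight n s τ) (Ioi 1) ∧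
      ∫ τ in Ioi (1 : ℝ), radialDiff n s u r τ * radialWeight n s τ = 0

lemma radialWeight_pos {n : ℕ} (hn : 2 ≤ n) (s : ℝ) {τ : ℝ} (hτ : 1 < τ) :
    0 < radialWeight n s τ :=
  mul_pos (mul_pos (by linarith) (Real.rpow_pos_of_pos (by nlinarith) _)) (Hker_pos hn s hτ)

lemma radialDiff_neg (n : ℕ) (s : ℝ) (u : ℝ → ℝ) (r τ : ℝ) :
    radialDiff n s (-u) r τ = -radialDiff n s u r τ := by
  simp only [radialDiff, Pi.neg_apply]
  ring

lemma IsRadiallySHarmonic.neg {n : ℕ} {s : ℝ} {u : ℝ → ℝ} (hu : IsRadiallySHarmonic n s u) :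
    IsRadiallySHarmonic n s (-u) := by
  intro r hr
  simp only [radialDiff_neg, neg_mul, integral_neg, neg_eq_zero]
  exact ⟨(hu r hr).1.neg, (hu r hr).2⟩

lemma IsRadiallySHarmonic.ae_eq_of_isMax {n : ℕ} (hn : 2 ≤ n) {s : ℝ} {u : ℝ → ℝ}
    (hu : IsRadiallySHarmonic n s u) {rb : ℝ} (hrb : 0 < rb) (hmax : ∀ r > (0 : ℝ), u r ≤ u rb) :
    ∀ᵐ τ ∂volume.restrict (Ioi 1), u (rb * τ) = u rb ∧ u (rb / τ) = u rb := by
  obtain ⟨hint, hzero⟩ := hu rb hrb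
  have hterms : ∀ τ : ℝ, 1 < τ →
      0 ≤ u rb - u (rb * τ) ∧ 0 ≤ u rb - u (rb / τ) ∧ 0 < τ ^ (2 * s - (n : ℝ)) :=
    fun τ hτ => ⟨sub_nonneg.2 (hmax _ (mul_pos hrb (by linarith))),
      sub_nonneg.2 (hmax _ (div_pos hrb (by linarith))), Real.rpow_pos_of_pos (by linarith) _⟩
  have hnonneg : 0 ≤ᵐ[volume.restrict (Ioi 1)]
      fun τ => radialDiff n s u rb τ * radialWeight n s τ := by
    filter_upwards [ae_restrict_mem measurableSet_Ioi] with τ hτ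
    obtain ⟨ha, hb, hp⟩ := hterms τ hτ
    exact mul_nonneg (add_nonneg ha (mul_nonneg hb hp.le)) (radialWeight_pos hn s hτ).le
  filter_upwards [(setIntegral_eq_zero_iff_of_nonneg_ae hnonneg hint).1 hzero,
    ae_restrict_mem measurableSet_Ioi] with τ hτ0 hτ
  obtain ⟨ha, hb, hp⟩ := hterms τ hτ
  have hdiff : radialDiff n s u rb τ = 0 :=
    (mul_eq_zero.1 hτ0).resolve_right (radialWeight_pos hn s hτ).ne'
  obtain ⟨ha0, hbp0⟩ := (add_eq_zero_iff_of_nonneg ha (mul_nonneg hb hp.le)).1 hdiff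
  have hb0 := (mul_eq_zero.1 hbp0).resolve_right hp.ne'
  constructor <;> linarith

lemma eq_of_ae_eq_dilations {u : ℝ → ℝ} (hcont : ContinuousOn u (Ioi 0)) {rb : ℝ} (hrb : 0 < rb)
    (h : ∀ᵐ τ ∂volume.restrict (Ioi 1), u (rb * τ) = u rb ∧ u (rb / τ) = u rb) :
    ∀ r > (0 : ℝ), u r = u rb := by
  have hmul : EqOn (fun τ => u (rb * τ)) (fun _ => u rb) (Ioi 1) :=
    Measure.eqOn_open_of_ae_eq (h.mono fun _ hτ => hτ.1) isOpen_Ioi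
      (hcont.comp (continuousOn_const.mul continuousOn_id) fun τ (hτ : 1 < τ) =>
        mul_pos hrb (by linarith))
      continuousOn_const
  have hdiv : EqOn (fun τ => u (rb / τ)) (fun _ => u rb) (Ioi 1) :=
    Measure.eqOn_open_of_ae_eq (h.mono fun _ hτ => hτ.2) isOpen_Ioi
      (hcont.comp (continuousOn_const.div continuousOn_id fun τ (hτ : 1 < τ) => by positivity)
        fun τ (hτ : 1 < τ) => div_pos hrb (by linarith))
      continuousOn_const
  intro r hr
  rcases lt_trichotomy r rb with hlt | rfl | hgt
  · simpa [div_div_cancel₀ hrb.ne'] using hdiv ((one_lt_div hr).2 hlt)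
  · rfl
  · simpa [mul_div_cancel₀ r hrb.ne'] using hmul ((one_lt_div hrb).2 hgt)

lemma IsRadiallySHarmonic.eq_of_isMax {n : ℕ} (hn : 2 ≤ n) {s : ℝ} {u : ℝ → ℝ}
    (hu : IsRadiallySHarmonic n s u) (hcont : ContinuousOn u (Ioi 0)) {rb : ℝ} (hrb : 0 < rb)
    (hmax : ∀ r > (0 : ℝ), u r ≤ u rb) : ∀ r > (0 : ℝ), u r = u rb :=
  eq_of_ae_eq_dilations hcont hrb (hu.ae_eq_of_isMax hn hrb hmax)

theorem stmt_9_general (n : ℕ) (hn : 2 ≤ n) (s : ℝ)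
    (u : ℝ → ℝ) (hcont : ContinuousOn u (Set.Ioi 0))
    (hharm : ∀ r > (0:ℝ),
      IntegrableOn
        (fun τ : ℝ =>
          (u r - u (r * τ) + (u r - u (r / τ)) * τ ^ (2 * s - (n : ℝ))) *
            (τ * (τ ^ 2 - 1) ^ (-1 - 2 * s) * Hker n s τ))
        (Set.Ioi 1) ∧
      (∫ τ in Set.Ioi (1:ℝ),
          (u r - u (r * τ) + (u r - u (r / τ)) * τ ^ (2 * s - (n : ℝ))) *
            (τ * (τ ^ 2 - 1) ^ (-1 - 2 * s) * Hker n s τ)) = 0)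
    (hext : (∃ rb > (0:ℝ), ∀ r > (0:ℝ), u r ≤ u rb) ∨
            (∃ rb > (0:ℝ), ∀ r > (0:ℝ), u rb ≤ u r)) :
    ∀ r > (0:ℝ), ∀ r' > (0:ℝ), u r = u r' := by
  have hu : IsRadiallySHarmonic n s u := hharm
  suffices h : ∃ rb > (0 : ℝ), ∀ r > (0 : ℝ), u r = u rb by
    obtain ⟨rb, -, h⟩ := h
    intro r hr r' hr'
    rw [h r hr, h r' hr']
  rcases hext with ⟨rb, hrb, hmax⟩ | ⟨rb, hrb, hmin⟩
  · exact ⟨rb, hrb, hu.eq_of_isMax hn hcont hrb hmax⟩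
  · refine ⟨rb, hrb, fun r hr => neg_injective ?_⟩
    exact hu.neg.eq_of_isMax hn hcont.neg hrb (fun r hr => neg_le_neg (hmin r hr)) r hr

/-- A continuous radial pointwise `s`-harmonic function which attains an absolute maximum
or an absolute minimum on `(0,∞)` must be constant. -/
theorem stmt_9 (n : ℕ) (hn : 2 ≤ n) (s : ℝ) (hs : s ∈ Set.Ioo (0:ℝ) 1)
    (u : ℝ → ℝ) (hcont : ContinuousOn u (Set.Ioi 0))
    (hharm : ∀ r > (0:ℝ),
      IntegrableOn
        (fun τ : ℝ =>
          (u r - u (r * τ) + (u r - u (r / τ)) * τ ^ (2 * s - (n : ℝ))) *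
            (τ * (τ ^ 2 - 1) ^ (-1 - 2 * s) * Hker n s τ))
        (Set.Ioi 1) ∧
      (∫ τ in Set.Ioi (1:ℝ),
          (u r - u (r * τ) + (u r - u (r / τ)) * τ ^ (2 * s - (n : ℝ))) *
            (τ * (τ ^ 2 - 1) ^ (-1 - 2 * s) * Hker n s τ)) = 0)
    (hext : (∃ rb > (0:ℝ), ∀ r > (0:ℝ), u r ≤ u rb) ∨
            (∃ rb > (0:ℝ), ∀ r > (0:ℝ), u rb ≤ u r)) :
    ∀ r > (0:ℝ), ∀ r' > (0:ℝ), u r = u r' :=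
  stmt_9_general n hn s u hcont hharm hext
end

section
/- Let a, b, c be real numbers with c > b > 0 and a > b + 1. Define f(t) = F(c−a, b, c, t) / F(c−a, b+1, c+1, t) for t ≤ 1, with F given by Euler's integral. Then f is differentiable at t = 1 (as a left derivative) and f'(1) = a(a−c) / (c(a−b−1)). -/
/-!
Write the integrals as `K · ∫₀¹ t^p (1-t)^q (1-tx)^r`. At `x = 1` this is a Beta integral, which
gives Gauss's formula `F(a,b,c,1) = Γ(c)Γ(c-a-b)/(Γ(c-a)Γ(c-b))`. The left difference quotients at
`x = 1` are dominated, by the mean value theorem, by `|r| t^(p+1) (1-t)^(q + min (r-1) 0)`, so one may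
differentiate under the integral sign and get another Beta integral: `F'(1) = ab/(c-a-b-1) · F(1)`.
With `a ↦ c - a`, the numerator and denominator of the quotient are in ratio `a/c` at `1`, and the
quotient rule gives the value.
-/

/-- The Gaussian hypergeometric function via Euler's integral (valid for `c > b > 0`). -/
noncomputable def Fhyp (a b c x : ℝ) : ℝ :=
  (Real.Gamma c / (Real.Gamma b * Real.Gamma (c - b))) *
    ∫ t in (0:ℝ)..1, t ^ (b - 1) * (1 - t) ^ (c - b - 1) * (1 - t * x) ^ (-a)

open MeasureTheory intervalIntegral Set Filter Real
open scoped Topology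

lemma intervalIntegrable_rpow_mul_one_sub_rpow {u v : ℝ} (hu : -1 < u) (hv : -1 < v) :
    IntervalIntegrable (fun t : ℝ => t ^ u * (1 - t) ^ v) volume 0 1 := by
  have hleft : IntervalIntegrable (fun t : ℝ => t ^ u * (1 - t) ^ v) volume 0 (1 / 2) := by
    refine (intervalIntegrable_rpow' hu).mul_continuousOn
      (ContinuousOn.rpow_const (by fun_prop) fun t ht => Or.inl ?_)
    rw [uIcc_of_le (by norm_num)] at ht
    linarith [ht.2]
  have hright : IntervalIntegrable (fun t : ℝ => t ^ u * (1 - t) ^ v) volume (1 / 2) 1 := by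
    have h := ((intervalIntegrable_rpow' hv (a := 0) (b := 1 / 2)).comp_sub_left 1).symm
    norm_num at h
    refine h.continuousOn_mul (ContinuousOn.rpow_const (by fun_prop) fun t ht => Or.inl ?_)
    rw [uIcc_of_le (by norm_num)] at ht
    linarith [ht.1]
  exact hleft.trans hright

theorem integral_rpow_mul_one_sub_rpow {u v : ℝ} (hu : 0 < u) (hv : 0 < v) :
    ∫ t in (0:ℝ)..1, t ^ (u - 1) * (1 - t) ^ (v - 1) = Gamma u * Gamma v / Gamma (u + v) := by
  have hbeta : Complex.betaIntegral u v = ↑(∫ t in (0:ℝ)..1, t ^ (u - 1) * (1 - t) ^ (v - 1)) := by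
    rw [Complex.betaIntegral, ← intervalIntegral.integral_ofReal]
    refine integral_congr fun t ht => ?_
    rw [uIcc_of_le zero_le_one] at ht
    rw [Complex.ofReal_mul, Complex.ofReal_cpow ht.1, Complex.ofReal_cpow (by linarith [ht.2])]
    push_cast
    ring
  have h := Complex.Gamma_mul_Gamma_eq_betaIntegral (s := u) (t := v)
    (by simpa using hu) (by simpa using hv)
  rw [hbeta, ← Complex.ofReal_add, Complex.Gamma_ofReal, Complex.Gamma_ofReal,
    Complex.Gamma_ofReal, ← Complex.ofReal_mul, ← Complex.ofReal_mul] at h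
  rw [eq_div_iff (Gamma_pos_of_pos (add_pos hu hv)).ne', Complex.ofReal_injective h, mul_comm]

lemma rpow_le_rpow_min_zero {y z s : ℝ} (hy : 0 < y) (hyz : y ≤ z) (hz : z ≤ 1) :
    z ^ s ≤ y ^ min s 0 := by
  rcases le_total s 0 with hs | hs
  · rw [min_eq_left hs]
    exact rpow_le_rpow_of_nonpos hy hyz hs
  · rw [min_eq_right hs, rpow_zero]
    exact rpow_le_one (hy.le.trans hyz) hz hs

lemma hasDerivAt_one_sub_mul_rpow {t x r : ℝ} (h : t * x < 1) :
    HasDerivAt (fun y => (1 - t * y) ^ r) (-(r * t * (1 - t * x) ^ (r - 1))) x := by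
  have hinner : HasDerivAt (fun y : ℝ => 1 - t * y) (-t) x := by
    simpa using ((hasDerivAt_id x).const_mul t).const_sub 1
  convert hinner.rpow_const (p := r) (Or.inl (sub_pos.mpr h).ne') using 1
  ring

lemma abs_one_sub_mul_rpow_sub_le {t x r : ℝ} (ht₀ : 0 < t) (ht₁ : t < 1) (hx₀ : 0 ≤ x)
    (hx₁ : x ≤ 1) :
    |(1 - t * x) ^ r - (1 - t) ^ r| ≤ |r| * t * (1 - t) ^ min (r - 1) 0 * (1 - x) := by
  have hts : ∀ s ∈ Icc x 1, 1 - t ≤ 1 - t * s ∧ 1 - t * s ≤ 1 := fun s hs =>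
    ⟨by nlinarith [hs.2], by nlinarith [hs.1]⟩
  have hderiv : ∀ s ∈ Icc x 1, HasDerivWithinAt (fun y => (1 - t * y) ^ r)
      (-(r * t * (1 - t * s) ^ (r - 1))) (Icc x 1) s := fun s hs =>
    (hasDerivAt_one_sub_mul_rpow (by linarith [(hts s hs).1])).hasDerivWithinAt
  have hbound : ∀ s ∈ Icc x 1,
      ‖-(r * t * (1 - t * s) ^ (r - 1))‖ ≤ |r| * t * (1 - t) ^ min (r - 1) 0 := by
    intro s hs
    have hpos : 0 < 1 - t * s := by linarith [(hts s hs).1]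
    rw [norm_neg, norm_mul, norm_mul, norm_of_nonneg ht₀.le,
      norm_of_nonneg (rpow_nonneg hpos.le _), Real.norm_eq_abs]
    gcongr
    exact rpow_le_rpow_min_zero (by linarith) (hts s hs).1 (hts s hs).2
  have h := (convex_Icc x 1).norm_image_sub_le_of_norm_hasDerivWithin_le hderiv hbound
    (right_mem_Icc.mpr hx₁) (left_mem_Icc.mpr hx₁)
  rwa [mul_one, Real.norm_eq_abs, Real.norm_eq_abs, abs_sub_comm x, abs_of_nonneg (sub_nonneg.mpr hx₁)]
    at h

lemma norm_rpow_mul_slope_one_sub_mul_rpow_le {p q r t x : ℝ} (ht₀ : 0 < t) (ht₁ : t < 1)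
    (hx₀ : 0 ≤ x) (hx₁ : x < 1) :
    ‖t ^ p * (1 - t) ^ q * (((1 - t * x) ^ r - (1 - t) ^ r) / (x - 1))‖
      ≤ |r| * (t ^ (p + 1) * (1 - t) ^ (q + min (r - 1) 0)) := by
  have hdiff := abs_one_sub_mul_rpow_sub_le (r := r) ht₀ ht₁ hx₀ hx₁.le
  have hx : 0 < 1 - x := sub_pos.mpr hx₁
  rw [norm_mul, norm_div, norm_of_nonneg (by positivity), Real.norm_eq_abs, Real.norm_eq_abs,
    abs_sub_comm x, abs_of_pos hx, rpow_add_one ht₀.ne', rpow_add (sub_pos.mpr ht₁)]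
  calc t ^ p * (1 - t) ^ q * (|(1 - t * x) ^ r - (1 - t) ^ r| / (1 - x))
      ≤ t ^ p * (1 - t) ^ q * (|r| * t * (1 - t) ^ min (r - 1) 0) := by
        gcongr
        rwa [div_le_iff₀ hx]
    _ = |r| * (t ^ p * t * ((1 - t) ^ q * (1 - t) ^ min (r - 1) 0)) := by ring

noncomputable def eulerIntegral (p q r x : ℝ) : ℝ :=
  ∫ t in (0:ℝ)..1, t ^ p * (1 - t) ^ q * (1 - t * x) ^ r

lemma eulerIntegral_one (p q r : ℝ) :
    eulerIntegral p q r 1 = ∫ t in (0:ℝ)..1, t ^ p * (1 - t) ^ (q + r) := by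
  refine integral_congr_Ioo_of_le zero_le_one fun t ht => ?_
  rw [mul_one, rpow_add (sub_pos.mpr ht.2), mul_assoc]

lemma intervalIntegrable_eulerIntegrand {p q r x : ℝ} (hp : -1 < p) (hq : -1 < q)
    (hqr : -1 < q + r) (hx : x ≤ 1) :
    IntervalIntegrable (fun t => t ^ p * (1 - t) ^ q * (1 - t * x) ^ r) volume 0 1 := by
  rcases hx.lt_or_eq with hx | rfl
  · refine (intervalIntegrable_rpow_mul_one_sub_rpow hp hq).mul_continuousOn
      (ContinuousOn.rpow_const (by fun_prop) fun t ht => Or.inl ?_)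
    rw [uIcc_of_le zero_le_one] at ht
    rcases le_total x 0 with h | h <;> nlinarith [ht.1, ht.2]
  · refine (intervalIntegrable_rpow_mul_one_sub_rpow hp hqr).congr_uIoo fun t ht => ?_
    rw [uIoo_of_le zero_le_one] at ht
    dsimp only
    rw [mul_one, rpow_add (sub_pos.mpr ht.2), mul_assoc]

lemma ae_mem_Ioo_of_mem_uIoc : ∀ᵐ t : ℝ, t ∈ uIoc (0:ℝ) 1 → t ∈ Ioo (0:ℝ) 1 := by
  filter_upwards [volume.ae_ne (1:ℝ)] with t ht1 ht
  rw [uIoc_of_le zero_le_one] at ht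
  exact ⟨ht.1, ht.2.lt_of_ne ht1⟩

theorem hasDerivWithinAt_eulerIntegral_one {p q r : ℝ} (hp : -1 < p) (hq : -1 < q)
    (hqr : 0 < q + r) :
    HasDerivWithinAt (eulerIntegral p q r)
      (-r * ∫ t in (0:ℝ)..1, t ^ (p + 1) * (1 - t) ^ (q + r - 1)) (Iic 1) 1 := by
  set m := min (r - 1) 0
  have hm : -1 < q + m := by
    rcases le_total (r - 1) 0 with h | h
    · rw [show m = r - 1 from min_eq_left h]; linarith
    · rw [show m = 0 from min_eq_right h]; linarith
  have hbound : ∀ᶠ x in 𝓝[<] (1:ℝ), ∀ᵐ t : ℝ, t ∈ uIoc (0:ℝ) 1 →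
      ‖t ^ p * (1 - t) ^ q * (((1 - t * x) ^ r - (1 - t) ^ r) / (x - 1))‖
        ≤ |r| * (t ^ (p + 1) * (1 - t) ^ (q + m)) := by
    filter_upwards [Ioo_mem_nhdsLT zero_lt_one] with x hx
    filter_upwards [ae_mem_Ioo_of_mem_uIoc] with t ht htI
    exact norm_rpow_mul_slope_one_sub_mul_rpow_le (ht htI).1 (ht htI).2 hx.1.le hx.2
  have hlim : ∀ᵐ t : ℝ, t ∈ uIoc (0:ℝ) 1 →
      Tendsto (fun x => t ^ p * (1 - t) ^ q * (((1 - t * x) ^ r - (1 - t) ^ r) / (x - 1)))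
        (𝓝[<] 1) (𝓝 (-r * (t ^ (p + 1) * (1 - t) ^ (q + r - 1)))) := by
    filter_upwards [ae_mem_Ioo_of_mem_uIoc] with t ht htI
    obtain ⟨ht₀, ht₁⟩ := ht htI
    have hderiv := hasDerivAt_one_sub_mul_rpow (t := t) (x := 1) (r := r) (by linarith)
    convert ((hasDerivAt_iff_tendsto_slope.mp hderiv).mono_left (nhdsLT_le_nhdsNE 1)).const_mul
      (t ^ p * (1 - t) ^ q) using 2
    · rw [slope_def_field, mul_one]
    · rw [mul_one, show q + r - 1 = q + (r - 1) by ring, rpow_add (sub_pos.mpr ht₁),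
        rpow_add_one ht₀.ne']
      ring
  have hslope := tendsto_integral_filter_of_dominated_convergence _
    (Eventually.of_forall fun x => by fun_prop) hbound
    ((intervalIntegrable_rpow_mul_one_sub_rpow (by linarith) hm).const_mul |r|) hlim
  rw [hasDerivWithinAt_iff_tendsto_slope, Iic_sdiff_right, ← intervalIntegral.integral_const_mul]
  refine hslope.congr' ?_
  filter_upwards [Ioo_mem_nhdsLT zero_lt_one] with x hx
  rw [slope_def_field, eulerIntegral, eulerIntegral,
    ← integral_sub (intervalIntegrable_eulerIntegrand hp hq (by linarith) hx.2.le)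
      (intervalIntegrable_eulerIntegrand hp hq (by linarith) le_rfl), ← intervalIntegral.integral_div]
  refine integral_congr fun t _ => ?_
  simp only [mul_one]
  ring

lemma Fhyp_eq_mul_eulerIntegral (a b c x : ℝ) :
    Fhyp a b c x = Gamma c / (Gamma b * Gamma (c - b)) * eulerIntegral (b - 1) (c - b - 1) (-a) x :=
  rfl

theorem Fhyp_one {a b c : ℝ} (hb : 0 < b) (hbc : b < c) (habc : a + b < c) :
    Fhyp a b c 1 = Gamma c * Gamma (c - a - b) / (Gamma (c - a) * Gamma (c - b)) := by
  rw [Fhyp_eq_mul_eulerIntegral, eulerIntegral_one, show c - b - 1 + -a = c - a - b - 1 by ring,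
    integral_rpow_mul_one_sub_rpow hb (by linarith), show b + (c - a - b) = c - a by ring]
  have := (Gamma_pos_of_pos hb).ne'
  have := (Gamma_pos_of_pos (sub_pos.mpr hbc)).ne'
  field_simp

lemma Fhyp_one_pos {a b c : ℝ} (hb : 0 < b) (hbc : b < c) (habc : a + b < c) :
    0 < Fhyp a b c 1 := by
  rw [Fhyp_one hb hbc habc]
  have := Gamma_pos_of_pos (show 0 < c by linarith)
  have := Gamma_pos_of_pos (show 0 < c - a - b by linarith)
  have := Gamma_pos_of_pos (show 0 < c - a by linarith)
  have := Gamma_pos_of_pos (show 0 < c - b by linarith)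
  positivity

theorem Fhyp_one_eq_mul_Fhyp_one {a b c : ℝ} (hb : 0 < b) (hbc : b < c) (habc : a + b < c) :
    Fhyp a b c 1 = (c - a) / c * Fhyp a (b + 1) (c + 1) 1 := by
  have hc : c ≠ 0 := by linarith
  have hca : c - a ≠ 0 := by linarith
  rw [Fhyp_one hb hbc habc, Fhyp_one (by linarith) (by linarith) (by linarith),
    show c + 1 - a - (b + 1) = c - a - b by ring, show c + 1 - (b + 1) = c - b by ring,
    show c + 1 - a = c - a + 1 by ring, Gamma_add_one hc, Gamma_add_one hca]
  have := (Gamma_pos_of_pos (show 0 < c by linarith)).ne'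
  have := (Gamma_pos_of_pos (show 0 < c - a by linarith)).ne'
  have := (Gamma_pos_of_pos (show 0 < c - b by linarith)).ne'
  field_simp

theorem hasDerivWithinAt_Fhyp_one {a b c : ℝ} (hb : 0 < b) (hbc : b < c) (habc : a + b + 1 < c) :
    HasDerivWithinAt (Fhyp a b c) (a * b / (c - a - b - 1) * Fhyp a b c 1) (Iic 1) 1 := by
  have h := (hasDerivWithinAt_eulerIntegral_one (p := b - 1) (q := c - b - 1) (r := -a)
    (by linarith) (by linarith) (by linarith)).const_mul (Gamma c / (Gamma b * Gamma (c - b)))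
  refine h.congr_deriv ?_
  rw [Fhyp_one hb hbc (by linarith), show b - 1 + 1 = b + 1 - 1 by ring,
    show c - b - 1 + -a - 1 = c - a - b - 1 - 1 by ring,
    integral_rpow_mul_one_sub_rpow (by linarith) (by linarith),
    show b + 1 + (c - a - b - 1) = c - a by ring, Gamma_add_one hb.ne']
  have hΓ : Gamma (c - a - b) = (c - a - b - 1) * Gamma (c - a - b - 1) := by
    rw [← Gamma_add_one (by linarith)]
    ring_nf
  rw [hΓ]
  have := (Gamma_pos_of_pos hb).ne'
  have := (Gamma_pos_of_pos (show 0 < c - a by linarith)).ne'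
  have := (Gamma_pos_of_pos (show 0 < c - b by linarith)).ne'
  have : c - a - b - 1 ≠ 0 := by linarith
  field_simp

/-- Left derivative of the Gaussian ratio at `t = 1`:
`f'(1) = a(a-c)/(c(a-b-1))` when `c > b > 0` and `a > b + 1`. -/
theorem stmt_16 (a b c : ℝ) (hb : 0 < b) (hcb : b < c) (hab : b + 1 < a) :
    HasDerivWithinAt
      (fun t => Fhyp (c - a) b c t / Fhyp (c - a) (b + 1) (c + 1) t)
      (a * (a - c) / (c * (a - b - 1))) (Set.Iic 1) 1 := by
  have hN := hasDerivWithinAt_Fhyp_one (a := c - a) hb hcb (by linarith)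
  have hD := hasDerivWithinAt_Fhyp_one (a := c - a) (b := b + 1) (c := c + 1)
    (by linarith) (by linarith) (by linarith)
  have hD₁ := Fhyp_one_pos (a := c - a) (b := b + 1) (c := c + 1)
    (by linarith) (by linarith) (by linarith)
  refine (hN.div hD hD₁.ne').congr_deriv ?_
  rw [Fhyp_one_eq_mul_Fhyp_one hb hcb (by linarith), show c - (c - a) - b - 1 = a - b - 1 by ring,
    show c + 1 - (c - a) - (b + 1) - 1 = a - b - 1 by ring, show c - (c - a) = a by ring]
  have : c ≠ 0 := by linarith
  have : a - b - 1 ≠ 0 := by linarith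
  field_simp
  ring
end

section
/- Let a, b, c be real numbers with −1 < a < 0 and c > b > 0. Define φ(x) = F(a, b, c, x) / F(a, b+1, c+1, x) for x < 1, with F given by Euler's integral. Then φ is positive on (−∞, 1) and log φ is convex on (−∞, 1); that is, the Gaussian ratio φ is logarithmically convex on (−∞, 1). -/
open MeasureTheory Set Real

noncomputable def weightedMoment (w : ℝ → ℝ) (k : ℕ) (p x : ℝ) : ℝ :=
  ∫ t in Ioo 0 1, w t * (t ^ k * (1 - t * x) ^ p)

lemma one_sub_mul_pos {t x : ℝ} (ht : t ∈ Icc (0:ℝ) 1) (hx : x < 1) : 0 < 1 - t * x := by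
  rcases le_or_gt x 0 with h | h <;> nlinarith [ht.1, ht.2]

lemma continuousOn_pow_mul_one_sub_mul_rpow (k : ℕ) (p : ℝ) :
    ContinuousOn (fun z : ℝ × ℝ => z.1 ^ k * (1 - z.1 * z.2) ^ p) (Icc 0 1 ×ˢ Iio 1) :=
  (continuousOn_fst.pow k).mul <| ContinuousOn.rpow_const (by fun_prop)
    fun z hz => Or.inl (one_sub_mul_pos hz.1 hz.2).ne'

lemma sub_mul_pow_sub_pow_nonneg {X Y : ℝ} (hX : 0 ≤ X) (hY : 0 ≤ Y) (n : ℕ) :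
    0 ≤ (X - Y) * (X ^ n - Y ^ n) := by
  rcases le_total X Y with h | h
  · exact mul_nonneg_of_nonpos_of_nonpos (sub_nonpos.2 h) (sub_nonpos.2 (pow_le_pow_left₀ hX h n))
  · exact mul_nonneg (sub_nonneg.2 h) (sub_nonneg.2 (pow_le_pow_left₀ hY h n))

lemma integral_mul_integral_le_of_symm {X : Type*} [MeasurableSpace X] {μ : Measure X}
    [SFinite μ] {F G h : X → ℝ} (hF : Integrable F μ) (hG : Integrable G μ)
    (hhF : Integrable (fun x => h x * F x) μ) (hhG : Integrable (fun x => h x * G x) μ)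
    (hFG : ∀ᵐ z ∂μ.prod μ, 0 ≤ (h z.1 - h z.2) * (F z.1 * G z.2 - F z.2 * G z.1)) :
    (∫ x, F x ∂μ) * ∫ x, h x * G x ∂μ ≤ (∫ x, h x * F x ∂μ) * ∫ x, G x ∂μ := by
  set Φ : X × X → ℝ := fun z => h z.1 * F z.1 * G z.2 - F z.1 * (h z.2 * G z.2)
  have hΦ : Integrable Φ (μ.prod μ) := (hhF.mul_prod hG).sub (hF.mul_prod hhG)
  have hΦ_eq : ∫ z, Φ z ∂μ.prod μ =
      (∫ x, h x * F x ∂μ) * (∫ x, G x ∂μ) - (∫ x, F x ∂μ) * ∫ x, h x * G x ∂μ := by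
    rw [integral_sub (hhF.mul_prod hG) (hF.mul_prod hhG), ← integral_prod_mul, ← integral_prod_mul]
  -- `Φ z + Φ z.swap` is the integrand of the hypothesis, and `Φ ∘ swap` has the same integral.
  have hsym : 0 ≤ ∫ z, (Φ z + Φ z.swap) ∂μ.prod μ :=
    integral_nonneg_of_ae <| hFG.mono fun z hz => by
      simp only [Φ, Prod.fst_swap, Prod.snd_swap, Pi.zero_apply]; linarith
  rw [integral_add hΦ (hΦ.swap : Integrable (fun z => Φ z.swap) _), integral_prod_swap Φ,
    hΦ_eq] at hsym
  linarith

section WeightedMoment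

variable {w : ℝ → ℝ}

lemma integrableOn_weightedMoment (hw : IntegrableOn w (Ioo 0 1)) (k : ℕ) (p : ℝ) {x : ℝ}
    (hx : x < 1) : IntegrableOn (fun t => w t * (t ^ k * (1 - t * x) ^ p)) (Ioo 0 1) :=
  hw.mul_continuousOn_of_subset
    ((continuousOn_pow_mul_one_sub_mul_rpow k p).comp (f := fun t => (t, x)) (by fun_prop)
      fun _ ht => ⟨ht, hx⟩)
    measurableSet_Ioo isCompact_Icc Ioo_subset_Icc_self

lemma weightedMoment_pos (hw : IntegrableOn w (Ioo 0 1)) (hw₀ : ∀ t ∈ Ioo (0:ℝ) 1, 0 < w t)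
    (k : ℕ) (p : ℝ) {x : ℝ} (hx : x < 1) : 0 < weightedMoment w k p x := by
  have hpos : ∀ t ∈ Ioo (0:ℝ) 1, 0 < w t * (t ^ k * (1 - t * x) ^ p) := fun t ht =>
    mul_pos (hw₀ t ht) (mul_pos (pow_pos ht.1 k)
      (rpow_pos_of_pos (one_sub_mul_pos (Ioo_subset_Icc_self ht) hx) p))
  rw [weightedMoment, setIntegral_pos_iff_support_of_nonneg_ae
    (ae_restrict_of_forall_mem measurableSet_Ioo fun t ht => (hpos t ht).le)
    (integrableOn_weightedMoment hw k p hx)]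
  calc (0 : ENNReal) < volume (Ioo (0:ℝ) 1) := by simp
    _ ≤ _ := measure_mono fun t ht => show t ∈ _ ∩ _ from ⟨(hpos t ht).ne', ht⟩

lemma hasDerivAt_weightedMoment (hw : IntegrableOn w (Ioo 0 1)) (k : ℕ) (p : ℝ) {x₀ : ℝ}
    (hx₀ : x₀ < 1) :
    HasDerivAt (weightedMoment w k p) (-p * weightedMoment w (k + 1) (p - 1) x₀) x₀ := by
  set s := Icc (x₀ - 1) ((1 + x₀) / 2)
  have hs : s ⊆ Iio 1 := fun x hx => mem_Iio.2 (by linarith [hx.2])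
  obtain ⟨C, hC⟩ := (isCompact_Icc.prod isCompact_Icc).exists_bound_of_continuousOn
    ((continuousOn_pow_mul_one_sub_mul_rpow (k + 1) (p - 1)).mono (prod_mono le_rfl hs))
  unfold weightedMoment
  rw [← integral_const_mul]
  refine (hasDerivAt_integral_of_dominated_loc_of_deriv_le (μ := volume.restrict (Ioo 0 1))
    (F := fun x t => w t * (t ^ k * (1 - t * x) ^ p))
    (F' := fun x t => -p * (w t * (t ^ (k + 1) * (1 - t * x) ^ (p - 1))))
    (s := s) (bound := fun t => |p| * (‖w t‖ * C)) (Icc_mem_nhds (by linarith) (by linarith)) ?_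
    (integrableOn_weightedMoment hw k p hx₀)
    ((integrableOn_weightedMoment hw (k + 1) (p - 1) hx₀).const_mul _).aestronglyMeasurable
    ?_ ((hw.norm.mul_const C).const_mul _) ?_).2
  · filter_upwards [Iio_mem_nhds hx₀] with x hx
    exact (integrableOn_weightedMoment hw k p hx).aestronglyMeasurable
  · filter_upwards [ae_restrict_mem measurableSet_Ioo] with t ht x hx
    rw [norm_mul, norm_mul, norm_neg, norm_eq_abs p]
    gcongr
    exact hC (t, x) ⟨Ioo_subset_Icc_self ht, hx⟩
  · filter_upwards [ae_restrict_mem measurableSet_Ioo] with t ht x hx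
    have hpos := one_sub_mul_pos (Ioo_subset_Icc_self ht) (hs hx)
    have := (((hasDerivAt_id' x).const_mul t).const_sub 1).rpow_const (p := p) (Or.inl hpos.ne')
    exact ((this.const_mul (t ^ k)).const_mul (w t)).congr_deriv (by ring)

lemma weightedMoment_div_le_weightedMoment_div (hw : IntegrableOn w (Ioo 0 1))
    (hw₀ : ∀ t ∈ Ioo (0:ℝ) 1, 0 < w t) (j : ℕ) (p : ℝ) {x : ℝ} (hx : x < 1) :
    weightedMoment w j (p - j) x / weightedMoment w 0 p x ≤
      weightedMoment w (j + 1) (p - j) x / weightedMoment w 1 p x := by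
  rw [div_le_div_iff₀ (weightedMoment_pos hw hw₀ 0 p hx) (weightedMoment_pos hw hw₀ 1 p hx)]
  have hshift (k : ℕ) (q : ℝ) : (fun t => w t * (t ^ (k + 1) * (1 - t * x) ^ q)) =
      fun t => t * (w t * (t ^ k * (1 - t * x) ^ q)) := by
    funext t; ring
  have hint (k : ℕ) (q : ℝ) := hshift k q ▸ integrableOn_weightedMoment hw (k + 1) q hx
  simp only [weightedMoment]
  rw [hshift, hshift]
  refine integral_mul_integral_le_of_symm (integrableOn_weightedMoment hw j (p - j) hx)
    (integrableOn_weightedMoment hw 0 p hx) (hint j _) (hint 0 p) ?_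
  rw [Measure.prod_restrict]
  refine ae_restrict_of_forall_mem (measurableSet_Ioo.prod measurableSet_Ioo) ?_
  rintro ⟨s, t⟩ ⟨hs, ht⟩
  have hus := one_sub_mul_pos (Ioo_subset_Icc_self hs) hx
  have hut := one_sub_mul_pos (Ioo_subset_Icc_self ht) hx
  have hsplit {u : ℝ} (hu : 0 < u) : u ^ p = u ^ (p - j) * u ^ j := by
    rw [← rpow_add_natCast hu.ne', sub_add_cancel]
  -- The integrands have ratio `(t / (1 - t x)) ^ j`, and `s (1 - t x) - t (1 - s x) = s - t`.
  calc (0 : ℝ) ≤ w s * w t * (1 - s * x) ^ (p - j) * (1 - t * x) ^ (p - j) *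
        ((s * (1 - t * x) - t * (1 - s * x)) * ((s * (1 - t * x)) ^ j - (t * (1 - s * x)) ^ j)) :=
      mul_nonneg (by have := hw₀ s hs; have := hw₀ t ht; positivity)
        (sub_mul_pow_sub_pow_nonneg (by nlinarith [hs.1]) (by nlinarith [ht.1]) j)
    _ = _ := by
      simp only
      rw [hsplit hus, hsplit hut, mul_pow, mul_pow]
      ring

lemma hasDerivAt_log_weightedMoment (hw : IntegrableOn w (Ioo 0 1))
    (hw₀ : ∀ t ∈ Ioo (0:ℝ) 1, 0 < w t) (k : ℕ) (p : ℝ) {x : ℝ} (hx : x < 1) :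
    HasDerivAt (fun y => log (weightedMoment w k p y))
      (-p * (weightedMoment w (k + 1) (p - 1) x / weightedMoment w k p x)) x :=
  ((hasDerivAt_weightedMoment hw k p hx).log (weightedMoment_pos hw hw₀ k p hx).ne').congr_deriv
    (by ring)

lemma hasDerivAt_deriv_log_weightedMoment (hw : IntegrableOn w (Ioo 0 1))
    (hw₀ : ∀ t ∈ Ioo (0:ℝ) 1, 0 < w t) (k : ℕ) (p : ℝ) {x : ℝ} (hx : x < 1) :
    HasDerivAt (fun y => -p * (weightedMoment w (k + 1) (p - 1) y / weightedMoment w k p y))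
      (p * (p - 1) * (weightedMoment w (k + 2) (p - 2) x / weightedMoment w k p x) -
        (p * (weightedMoment w (k + 1) (p - 1) x / weightedMoment w k p x)) ^ 2) x := by
  have hM := (weightedMoment_pos hw hw₀ k p hx).ne'
  have h₁ := hasDerivAt_weightedMoment hw (k + 1) (p - 1) hx
  rw [show p - 1 - 1 = p - 2 by ring] at h₁
  refine ((h₁.div (hasDerivAt_weightedMoment hw k p hx) hM).const_mul (-p)).congr_deriv ?_
  field_simp
  ring

theorem convexOn_log_weightedMoment_div (hw : IntegrableOn w (Ioo 0 1))
    (hw₀ : ∀ t ∈ Ioo (0:ℝ) 1, 0 < w t) {α : ℝ} (hα₀ : 0 ≤ α) (hα₁ : α ≤ 1) :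
    ConvexOn ℝ (Iio 1) (fun x => log (weightedMoment w 0 α x / weightedMoment w 1 α x)) := by
  set M := weightedMoment w
  refine ConvexOn.congr (f := fun x => log (M 0 α x) - log (M 1 α x)) ?_ fun x hx =>
    (log_div (weightedMoment_pos hw hw₀ 0 α hx).ne' (weightedMoment_pos hw hw₀ 1 α hx).ne').symm
  refine convexOn_of_hasDerivWithinAt2_nonneg (convex_Iio 1)
    (f' := fun x => -α * (M 1 (α - 1) x / M 0 α x) - -α * (M 2 (α - 1) x / M 1 α x))
    (f'' := fun x => (α * (α - 1) * (M 2 (α - 2) x / M 0 α x) - (α * (M 1 (α - 1) x / M 0 α x)) ^ 2)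
      - (α * (α - 1) * (M 3 (α - 2) x / M 1 α x) - (α * (M 2 (α - 1) x / M 1 α x)) ^ 2))
    (fun x hx => ?_) ?_ ?_ ?_ <;> try rw [interior_Iio]
  · exact ((hasDerivAt_log_weightedMoment hw hw₀ 0 α hx).sub
      (hasDerivAt_log_weightedMoment hw hw₀ 1 α hx)).continuousAt.continuousWithinAt
  · exact fun x hx => ((hasDerivAt_log_weightedMoment hw hw₀ 0 α hx).sub
      (hasDerivAt_log_weightedMoment hw hw₀ 1 α hx)).hasDerivWithinAt
  · exact fun x hx => ((hasDerivAt_deriv_log_weightedMoment hw hw₀ 0 α hx).sub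
      (hasDerivAt_deriv_log_weightedMoment hw hw₀ 1 α hx)).hasDerivWithinAt
  · intro x hx
    have h₀ : 0 ≤ M 1 (α - 1) x / M 0 α x :=
      (div_pos (weightedMoment_pos hw hw₀ 1 _ hx) (weightedMoment_pos hw hw₀ 0 α hx)).le
    have h₁ := weightedMoment_div_le_weightedMoment_div hw hw₀ 1 α hx
    have h₂ := weightedMoment_div_le_weightedMoment_div hw hw₀ 2 α hx
    simp only [Nat.cast_one, Nat.cast_ofNat, Nat.reduceAdd] at h₁ h₂
    nlinarith [mul_nonneg (mul_nonneg hα₀ (sub_nonneg.2 hα₁)) (sub_nonneg.2 h₂),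
      mul_nonneg (sq_nonneg α) (mul_nonneg (sub_nonneg.2 h₁) (add_nonneg h₀ (h₀.trans h₁)))]

end WeightedMoment

noncomputable def betaWeight (b c t : ℝ) : ℝ := t ^ (b - 1) * (1 - t) ^ (c - b - 1)

lemma betaWeight_pos (b c : ℝ) {t : ℝ} (ht : t ∈ Ioo (0:ℝ) 1) : 0 < betaWeight b c t :=
  mul_pos (rpow_pos_of_pos ht.1 _) (rpow_pos_of_pos (sub_pos.2 ht.2) _)

lemma integrableOn_betaWeight {b c : ℝ} (hb : 0 < b) (hcb : b < c) :
    IntegrableOn (betaWeight b c) (Ioo 0 1) := by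
  have h := (Complex.betaIntegral_convergent (u := b) (v := (c - b : ℝ))
    (by simpa using hb) (by simpa using hcb)).norm
  rw [intervalIntegrable_iff_integrableOn_Ioo_of_le zero_le_one] at h
  refine h.congr_fun (fun t ht => ?_) measurableSet_Ioo
  have h1t : (1 : ℂ) - t = ((1 - t : ℝ) : ℂ) := by push_cast; ring
  simp only [betaWeight, norm_mul, h1t, Complex.norm_cpow_eq_rpow_re_of_pos ht.1,
    Complex.norm_cpow_eq_rpow_re_of_pos (sub_pos.2 ht.2)]
  simp

lemma Fhyp_eq_weightedMoment (a b c x : ℝ) :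
    Fhyp a b c x = Real.Gamma c / (Real.Gamma b * Real.Gamma (c - b)) *
      weightedMoment (betaWeight b c) 0 (-a) x := by
  rw [Fhyp, intervalIntegral.integral_of_le zero_le_one, integral_Ioc_eq_integral_Ioo]
  congr 2 with t
  simp only [betaWeight]
  ring

lemma Fhyp_add_one_eq_weightedMoment (a b c x : ℝ) :
    Fhyp a (b + 1) (c + 1) x = Real.Gamma (c + 1) / (Real.Gamma (b + 1) * Real.Gamma (c - b)) *
      weightedMoment (betaWeight b c) 1 (-a) x := by
  rw [Fhyp, intervalIntegral.integral_of_le zero_le_one, integral_Ioc_eq_integral_Ioo,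
    show c + 1 - (b + 1) = c - b by ring]
  refine congrArg _ (setIntegral_congr_fun measurableSet_Ioo fun t ht => ?_)
  have := ht.1.ne'
  simp only [add_sub_cancel_right, betaWeight, rpow_sub_one this, pow_one]
  field_simp

/-- Logarithmic convexity of the Gaussian ratio `F(a,b,c,x)/F(a,b+1,c+1,x)` on
`(-∞,1)` for `-1 < a < 0` and `c > b > 0`. -/
theorem stmt_18 (a b c : ℝ) (ha₁ : -1 < a) (ha₂ : a < 0) (hb : 0 < b) (hcb : b < c) :
    (∀ x < (1:ℝ), 0 < Fhyp a b c x / Fhyp a (b + 1) (c + 1) x) ∧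
    ConvexOn ℝ (Set.Iio 1)
      (fun x => Real.log (Fhyp a b c x / Fhyp a (b + 1) (c + 1) x)) := by
  set M := weightedMoment (betaWeight b c)
  have hw := integrableOn_betaWeight hb hcb
  have hw₀ : ∀ t ∈ Ioo (0:ℝ) 1, 0 < betaWeight b c t := fun t => betaWeight_pos b c
  set C := Real.Gamma c / (Real.Gamma b * Real.Gamma (c - b)) /
    (Real.Gamma (c + 1) / (Real.Gamma (b + 1) * Real.Gamma (c - b)))
  have hC : 0 < C := by
    have := Gamma_pos_of_pos hb
    have := Gamma_pos_of_pos (hb.trans hcb)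
    have := Gamma_pos_of_pos (sub_pos.2 hcb)
    have := Gamma_pos_of_pos (add_pos hb one_pos)
    have := Gamma_pos_of_pos (add_pos (hb.trans hcb) one_pos)
    positivity
  have hratio (x : ℝ) :
      Fhyp a b c x / Fhyp a (b + 1) (c + 1) x = C * (M 0 (-a) x / M 1 (-a) x) := by
    rw [Fhyp_eq_weightedMoment, Fhyp_add_one_eq_weightedMoment, mul_div_mul_comm]
  have hpos : ∀ x < (1:ℝ), 0 < M 0 (-a) x / M 1 (-a) x := fun x hx =>
    div_pos (weightedMoment_pos hw hw₀ 0 _ hx) (weightedMoment_pos hw hw₀ 1 _ hx)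
  refine ⟨fun x hx => hratio x ▸ mul_pos hC (hpos x hx), ?_⟩
  refine ((convexOn_log_weightedMoment_div hw hw₀ (α := -a) (by linarith) (by linarith)).add_const
    (log C)).congr fun x hx => ?_
  rw [Pi.add_apply, hratio, log_mul hC.ne' (hpos x hx).ne', add_comm]
end
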